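/- In U = U_q(sp₄) the following four commutation relations hold (note E_{β₁}* = F₁K₁): F₁K₁E_{β₁} = q²E_{β₁}F₁K₁ − q²(K₁² − 1)/(q − q⁻¹); F₁K₁E_{β₂} = q²E_{β₂}F₁K₁ + q²E_{β₃}; F₁K₁E_{β₃} = E_{β₃}F₁K₁ + [2]_q E_{β₄}; F₁K₁E_{β₄} = q⁻²E_{β₄}F₁K₁. -/

import Mathlib

noncomputable section

open scoped TensorProduct RealInnerProductSpace

/-- The quantum integer `[n]_q = (q^n - q^(-n))/(q - q⁻¹)`. -/
def qnum (q : ℝ) (n : ℤ) : ℝ := (q ^ n - q ^ (-n)) / (q - q⁻¹)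

/-- Generators of `U_q(sp₄)` inside an arbitrary ℝ-algebra `U`, together with the
defining relations of the presented algebra `U_q(sp₄)`. -/
structure Sp4Gens (q : ℝ) (U : Type) [Ring U] [Algebra ℝ U] : Type where
  E1 : U
  E2 : U
  F1 : U
  F2 : U
  K1 : U
  K1i : U
  K2 : U
  K2i : U
  relK1 : K1 * K1i = 1
  relK1' : K1i * K1 = 1
  relK2 : K2 * K2i = 1
  relK2' : K2i * K2 = 1
  relK12 : K1 * K2 = K2 * K1
  relK12i : K1 * K2i = K2i * K1
  relK1i2 : K1i * K2 = K2 * K1i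
  relK1i2i : K1i * K2i = K2i * K1i
  relK1E1 : K1 * E1 = (q ^ (2 : ℤ)) • (E1 * K1)
  relK1E2 : K1 * E2 = (q ^ (-2 : ℤ)) • (E2 * K1)
  relK2E1 : K2 * E1 = (q ^ (-2 : ℤ)) • (E1 * K2)
  relK2E2 : K2 * E2 = (q ^ (4 : ℤ)) • (E2 * K2)
  relK1F1 : K1 * F1 = (q ^ (-2 : ℤ)) • (F1 * K1)
  relK1F2 : K1 * F2 = (q ^ (2 : ℤ)) • (F2 * K1)
  relK2F1 : K2 * F1 = (q ^ (2 : ℤ)) • (F1 * K2)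
  relK2F2 : K2 * F2 = (q ^ (-4 : ℤ)) • (F2 * K2)
  relE1F1 : E1 * F1 - F1 * E1 = (q - q⁻¹)⁻¹ • (K1 - K1i)
  relE2F2 : E2 * F2 - F2 * E2 = (q ^ (2 : ℤ) - q ^ (-2 : ℤ))⁻¹ • (K2 - K2i)
  relE1F2 : E1 * F2 = F2 * E1
  relE2F1 : E2 * F1 = F1 * E2
  serreE1 : E1 ^ 3 * E2 - qnum q 3 • (E1 ^ 2 * E2 * E1) + qnum q 3 • (E1 * E2 * E1 ^ 2)
      - E2 * E1 ^ 3 = 0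
  serreE2 : E2 ^ 2 * E1 - (q ^ (2 : ℤ) + q ^ (-2 : ℤ)) • (E2 * E1 * E2) + E1 * E2 ^ 2 = 0
  serreF1 : F1 ^ 3 * F2 - qnum q 3 • (F1 ^ 2 * F2 * F1) + qnum q 3 • (F1 * F2 * F1 ^ 2)
      - F2 * F1 ^ 3 = 0
  serreF2 : F2 ^ 2 * F1 - (q ^ (2 : ℤ) + q ^ (-2 : ℤ)) • (F2 * F1 * F2) + F1 * F2 ^ 2 = 0

variable {q : ℝ} {U : Type} [Ring U] [Algebra ℝ U]

/-- The quantum root vector `E_{β₁} = E₁`. -/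
def Eb1 (g : Sp4Gens q U) : U := g.E1

/-- The quantum root vector `E_{β₂}`. -/
def Eb2 (g : Sp4Gens q U) : U :=
  (qnum q 2)⁻¹ • (g.E1 ^ 2 * g.E2) - q⁻¹ • (g.E1 * g.E2 * g.E1)
    + (q ^ (-2 : ℤ) * (qnum q 2)⁻¹) • (g.E2 * g.E1 ^ 2)

/-- The quantum root vector `E_{β₃}`. -/
def Eb3 (g : Sp4Gens q U) : U := g.E1 * g.E2 - (q ^ (-2 : ℤ)) • (g.E2 * g.E1)

/-- The quantum root vector `E_{β₄} = E₂`. -/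
def Eb4 (g : Sp4Gens q U) : U := g.E2

/-- `E_{β₁}* = F₁K₁`, the image of `E_{β₁}` under the star anti-automorphism
(the star is the unique ℝ-linear anti-automorphism with `Eᵢ* = FᵢKᵢ`, `Fᵢ* = Kᵢ⁻¹Eᵢ`,
`Kᵢ* = Kᵢ`; on the elements below its value is forced by anti-multiplicativity). -/
def sEb1 (g : Sp4Gens q U) : U := g.F1 * g.K1

/-- `E_{β₂}*`, the image of `E_{β₂}` under the star anti-automorphism. -/
def sEb2 (g : Sp4Gens q U) : U :=
  (qnum q 2)⁻¹ • (g.F2 * g.K2 * (g.F1 * g.K1) ^ 2)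
    - q⁻¹ • (g.F1 * g.K1 * (g.F2 * g.K2) * (g.F1 * g.K1))
    + (q ^ (-2 : ℤ) * (qnum q 2)⁻¹) • ((g.F1 * g.K1) ^ 2 * (g.F2 * g.K2))

/-- `E_{β₃}*`, the image of `E_{β₃}` under the star anti-automorphism. -/
def sEb3 (g : Sp4Gens q U) : U :=
  g.F2 * g.K2 * (g.F1 * g.K1) - (q ^ (-2 : ℤ)) • (g.F1 * g.K1 * (g.F2 * g.K2))

/-- `E_{β₄}* = F₂K₂`, the image of `E_{β₄}` under the star anti-automorphism. -/
def sEb4 (g : Sp4Gens q U) : U := g.F2 * g.K2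

/-- The quantized Levi factor `U_q(𝔩)`, i.e. the unital subalgebra generated by
`E₁, F₁, K₁, K₁⁻¹, K₂, K₂⁻¹`. -/
def Uql (g : Sp4Gens q U) : Subalgebra ℝ U :=
  Algebra.adjoin ℝ {g.E1, g.F1, g.K1, g.K1i, g.K2, g.K2i}

/-! Write `X = F₁K₁` and `[X, u]_c = X u - c u X`. These `c`-commutators satisfy the twisted
Leibniz rule `[X, u v]_{c d} = [X, u]_c v + c u [X, v]_d`, so everything follows from
`[X, E₁]_{q²} = -q²(K₁² - 1)/(q - q⁻¹)` and `[X, E₂]_{q⁻²} = 0`, which come straight from the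
relations. For `E_{β₃}` the `K₁²`-terms cancel because `K₁²E₂ = q⁻⁴E₂K₁²`, leaving
`q²(1 - q⁻⁴)/(q - q⁻¹) E₂ = [2]_q E₂`; for `E_{β₂} = [2]_q⁻¹ [E₁, E_{β₃}]` they cancel because
`K₁` commutes with `E_{β₃}`. -/

section QCommutator

variable {R A : Type*} [CommRing R] [Ring A] [Algebra R A]

def qCommutator (X : A) (c : R) : A →ₗ[R] A :=
  LinearMap.mulLeft R X - c • LinearMap.mulRight R X

@[simp]
theorem qCommutator_apply (X : A) (c : R) (u : A) :
    qCommutator X c u = X * u - c • (u * X) := rfl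

theorem qCommutator_eq_iff {X : A} {c : R} {u v : A} :
    qCommutator X c u = v ↔ X * u = c • (u * X) + v := by
  rw [qCommutator_apply, sub_eq_iff_eq_add']

theorem qCommutator_eq_zero_iff {X : A} {c : R} {u : A} :
    qCommutator X c u = 0 ↔ X * u = c • (u * X) := by
  rw [qCommutator_eq_iff, add_zero]

theorem qCommutator_mul (X : A) {c d e : R} (h : c * d = e) (u v : A) :
    qCommutator X e (u * v) = qCommutator X c u * v + c • (u * qCommutator X d v) := by
  subst h
  simp only [qCommutator_apply, sub_mul, mul_sub, smul_sub, smul_mul_assoc, mul_smul_comm,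
    smul_smul, mul_assoc]
  abel

theorem qCommutator_pow_eq_zero {X u : A} {c : R} (h : qCommutator X c u = 0) (n : ℕ) :
    qCommutator (X ^ n) (c ^ n) u = 0 := by
  induction n with
  | zero => simp
  | succ n ih =>
    rw [qCommutator_eq_zero_iff] at h ih ⊢
    rw [pow_succ, mul_assoc, h, mul_smul_comm, ← mul_assoc, ih, smul_mul_assoc, mul_assoc, smul_smul,
      pow_succ']

end QCommutator

theorem ne_zero_of_sub_inv_ne_zero {K : Type*} [DivisionRing K] {a : K} (h : a - a⁻¹ ≠ 0) :
    a ≠ 0 := by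
  rintro rfl
  simp at h

theorem zpow_mul_zpow_neg {G₀ : Type*} [GroupWithZero G₀] {a : G₀} (ha : a ≠ 0) (n : ℤ) :
    a ^ n * a ^ (-n) = 1 := by
  rw [← zpow_add₀ ha, add_neg_cancel, zpow_zero]

theorem qnum_two {q : ℝ} (h : q - q⁻¹ ≠ 0) : qnum q 2 = q + q⁻¹ := by
  have hq := ne_zero_of_sub_inv_ne_zero h
  rw [qnum, div_eq_iff h, zpow_neg, zpow_two]
  field_simp
  ring

theorem qnum_two_ne_zero {q : ℝ} (h : q - q⁻¹ ≠ 0) : qnum q 2 ≠ 0 := by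
  have hq := ne_zero_of_sub_inv_ne_zero h
  rw [qnum_two h]
  field_simp
  positivity

namespace Sp4Gens

variable {q : ℝ} {U : Type} [Ring U] [Algebra ℝ U] (g : Sp4Gens q U)

theorem qCommutator_K1_E1 : qCommutator g.K1 (q ^ (2 : ℤ)) g.E1 = 0 :=
  qCommutator_eq_zero_iff.2 g.relK1E1

theorem qCommutator_K1_E2 : qCommutator g.K1 (q ^ (-2 : ℤ)) g.E2 = 0 :=
  qCommutator_eq_zero_iff.2 g.relK1E2

theorem commute_K1_Eb3 (hq : q ≠ 0) : Commute g.K1 (Eb3 g) := by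
  suffices qCommutator g.K1 (1 : ℝ) (Eb3 g) = 0 by
    rwa [qCommutator_eq_zero_iff, one_smul] at this
  rw [Eb3, map_sub, map_smul, qCommutator_mul _ (zpow_mul_zpow_neg hq 2),
    qCommutator_mul _ (zpow_neg_mul_zpow_self 2 hq), qCommutator_K1_E1, qCommutator_K1_E2]
  simp

theorem qCommutator_sEb1_E1 :
    qCommutator (sEb1 g) (q ^ (2 : ℤ)) g.E1 = -((q ^ (2 : ℤ) * (q - q⁻¹)⁻¹) • (g.K1 ^ 2 - 1)) := by
  have hK : (g.K1 - g.K1i) * g.K1 = g.K1 ^ 2 - 1 := by rw [sub_mul, g.relK1', sq]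
  rw [qCommutator_apply, sEb1, mul_assoc, g.relK1E1, mul_smul_comm, ← mul_assoc, ← mul_assoc,
    ← smul_sub, ← sub_mul, ← neg_sub, g.relE1F1, ← hK, neg_mul, smul_mul_assoc, smul_neg,
    smul_smul]

theorem qCommutator_sEb1_E2 : qCommutator (sEb1 g) (q ^ (-2 : ℤ)) g.E2 = 0 := by
  rw [qCommutator_apply, sEb1, mul_assoc, g.relK1E2, mul_smul_comm, ← mul_assoc, ← mul_assoc,
    g.relE2F1, sub_self]

theorem qCommutator_sEb1_Eb3 (hq : q ≠ 0) :
    qCommutator (sEb1 g) (1 : ℝ) (Eb3 g) = qnum q 2 • g.E2 := by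
  have hK2E2 := qCommutator_eq_zero_iff.1 (qCommutator_pow_eq_zero g.qCommutator_K1_E2 2)
  rw [Eb3, map_sub, map_smul, qCommutator_mul _ (zpow_mul_zpow_neg hq 2),
    qCommutator_mul _ (zpow_neg_mul_zpow_self 2 hq), qCommutator_sEb1_E1, qCommutator_sEb1_E2]
  simp only [mul_zero, zero_mul, smul_zero, add_zero, zero_add, neg_mul, mul_neg, smul_mul_assoc,
    mul_smul_comm, sub_mul, mul_sub, hK2E2, one_mul, mul_one, smul_neg, smul_sub]
  rw [qnum]
  match_scalars
  · ring
  · simp only [zpow_neg, zpow_ofNat]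
    field_simp

theorem Eb2_eq_smul_lie (h : q - q⁻¹ ≠ 0) : Eb2 g = (qnum q 2)⁻¹ • ⁅g.E1, Eb3 g⁆ := by
  have hq := ne_zero_of_sub_inv_ne_zero h
  rw [Eb2, Eb3, Ring.lie_def, qnum_two h]
  simp only [mul_sub, sub_mul, mul_smul_comm, smul_mul_assoc, smul_sub, smul_smul, mul_assoc, sq]
  match_scalars
  · rfl
  · simp only [zpow_neg, zpow_ofNat]
    field_simp
    ring
  · simp only [zpow_neg, zpow_ofNat]
    field_simp

theorem qCommutator_sEb1_Eb2 (h : q - q⁻¹ ≠ 0) :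
    qCommutator (sEb1 g) (q ^ (2 : ℤ)) (Eb2 g) = q ^ (2 : ℤ) • Eb3 g := by
  have hq := ne_zero_of_sub_inv_ne_zero h
  have hK : Commute (g.K1 ^ 2 - 1) (Eb3 g) :=
    ((g.commute_K1_Eb3 hq).pow_left 2).sub_left (Commute.one_left _)
  rw [Eb2_eq_smul_lie g h, map_smul, Ring.lie_def, map_sub, qCommutator_mul _ (mul_one _),
    qCommutator_mul _ (one_mul _), qCommutator_sEb1_E1, qCommutator_sEb1_Eb3 g hq, neg_mul,
    smul_mul_assoc, hK.eq, Eb3]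
  simp only [mul_neg, mul_smul_comm, smul_mul_assoc, one_smul]
  have hqnum := qnum_two_ne_zero h
  match_scalars
  · ring
  · field_simp
  · simp only [zpow_neg, zpow_ofNat]
    field_simp

end Sp4Gens

/-- commutation relations between `E_{β₁}* = F₁K₁` and the quantum
root vectors `E_{βᵢ}`. -/
theorem commutation_sEb1_root_vectors (hq0 : 0 < q) (hq1 : q < 1) (g : Sp4Gens q U) :
    g.F1 * g.K1 * Eb1 g
        = (q ^ (2 : ℤ)) • (Eb1 g * (g.F1 * g.K1))
          - (q ^ (2 : ℤ) * (q - q⁻¹)⁻¹) • (g.K1 ^ 2 - 1) ∧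
      g.F1 * g.K1 * Eb2 g
        = (q ^ (2 : ℤ)) • (Eb2 g * (g.F1 * g.K1)) + (q ^ (2 : ℤ)) • Eb3 g ∧
      g.F1 * g.K1 * Eb3 g = Eb3 g * (g.F1 * g.K1) + qnum q 2 • Eb4 g ∧
      g.F1 * g.K1 * Eb4 g = (q ^ (-2 : ℤ)) • (Eb4 g * (g.F1 * g.K1)) := by
  have hq : q - q⁻¹ ≠ 0 := (sub_neg.2 (hq1.trans ((one_lt_inv₀ hq0).2 hq1))).ne
  refine ⟨?_, ?_, ?_, ?_⟩
  · rw [sub_eq_add_neg]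
    exact qCommutator_eq_iff.1 g.qCommutator_sEb1_E1
  · exact qCommutator_eq_iff.1 (g.qCommutator_sEb1_Eb2 hq)
  · rw [← one_smul ℝ (Eb3 g * _)]
    exact qCommutator_eq_iff.1 (g.qCommutator_sEb1_Eb3 hq0.ne')
  · exact qCommutator_eq_zero_iff.1 g.qCommutator_sEb1_E2
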